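/- Let (X,d) be a metric space, I ⊂ ℝ a closed interval, and equip I × X with the product distance d_c((t,x),(s,y)) = sqrt(|t−s|² + d(x,y)²). Let f : I × X → ℝ be of the form f(t,x) = g₁(x) + h(t)g₂(x), where g₁, g₂ : X → ℝ and h : I → ℝ are Lipschitz. Then for every (t,x) ∈ I × X one has lip f(t,x)² ≤ lip f^{(t)}(x)² + lip f^{(x)}(t)², where f^{(t)} : X → ℝ is f(t,·) and f^{(x)} : I → ℝ is f(·,x). -/

import Mathlib

open Filter Set Metric Topology

noncomputable section

namespace MMS

/-- The local Lipschitz constant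
`lip u (z) := limsup_{w → z} |u(w) - u(z)| / d(w,z)` (equal to `0` at isolated points). -/
def liploc {Z : Type*} [MetricSpace Z] (u : Z → ℝ) (z : Z) : ℝ :=
  limsup (fun w => |u w - u z| / dist w z) (𝓝[≠] z)

/-- The cartesian product `I × X` endowed with the distance
`d_c((t,x),(s,y)) = sqrt (|t-s|² + d(x,y)²)`. -/
abbrev Xc (I : Set ℝ) (X : Type*) [MetricSpace X] : Type _ := WithLp 2 (↥I × X)

/-- The identification of `I × X` with the metric space `X_c`. -/
def toC {I : Set ℝ} {X : Type*} [MetricSpace X] (p : ↥I × X) : Xc I X :=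
  (WithLp.equiv 2 (↥I × X)).symm p

/- The increment of `f(t,x) = g₁(x) + h(t) g₂(x)` splits into the increments of the two slices
through `(t,x)` plus the mixed difference `(h s - h t)(g₂ y - g₂ x)`, which is
`O(|s - t| d(y,x)) = o(d_c)`. Near `(t,x)` the slice increments are at most `(A + ε) d(y,x)` and
`(B + ε) |s - t|`, where `A`, `B` are the local Lipschitz constants of the slices, and by
Cauchy–Schwarz `A' d(y,x) + B' |s - t| ≤ √(A'² + B'²) d_c`; let `ε → 0`. -/

open WithLp
open scoped NNReal

lemma mul_add_mul_le_sqrt_mul_sqrt (a b c d : ℝ) :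
    a * c + b * d ≤ √(a ^ 2 + b ^ 2) * √(c ^ 2 + d ^ 2) := by
  rw [← Real.sqrt_mul (by positivity)]
  exact Real.le_sqrt_of_sq_le (by nlinarith [sq_nonneg (a * d - b * c)])

lemma WithLp.prod_dist_eq_sqrt {α β : Type*} [Dist α] [Dist β] (w z : WithLp 2 (α × β)) :
    dist w z = √(dist w.fst z.fst ^ 2 + dist w.snd z.snd ^ 2) := by
  rw [WithLp.prod_dist_eq_add (by norm_num), Real.sqrt_eq_rpow]
  norm_num

section liploc

variable {Z : Type*} [MetricSpace Z] {u : Z → ℝ} {z : Z} {c : ℝ}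

lemma liploc_nonneg (u : Z → ℝ) (z : Z) : 0 ≤ liploc u z := by
  rw [liploc, limsup_eq]
  rcases eq_or_neBot (𝓝[≠] z) with hbot | hne
  · simp [hbot]
  · refine Real.sInf_nonneg fun a ha => ?_
    obtain ⟨w, hw⟩ := Eventually.exists (f := 𝓝[≠] z) ha
    exact (div_nonneg (abs_nonneg _) dist_nonneg).trans hw

lemma liploc_le_of_eventually_le (hc : 0 ≤ c)
    (h : ∀ᶠ w in 𝓝 z, |u w - u z| ≤ c * dist w z) : liploc u z ≤ c := by
  rcases eq_or_neBot (𝓝[≠] z) with hbot | hne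
  · simpa [liploc, hbot, limsup_eq] using hc
  · refine limsup_le_of_le (isCoboundedUnder_le_of_le _ fun w => by positivity) ?_
    filter_upwards [eventually_nhdsWithin_of_eventually_nhds h] with w hw
    exact div_le_of_le_mul₀ dist_nonneg hc hw

/- The Lipschitz bound keeps the difference quotients bounded above, so that `liploc u z` is a
genuine `limsup` and not the junk value `0` of an unbounded one. -/
lemma eventually_abs_sub_le_of_liploc_lt {K : ℝ≥0} (hu : LipschitzWith K u)
    (hc : liploc u z < c) : ∀ᶠ w in 𝓝 z, |u w - u z| ≤ c * dist w z := by
  have hbdd : IsBoundedUnder (· ≤ ·) (𝓝[≠] z) (fun w => |u w - u z| / dist w z) :=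
    isBoundedUnder_of ⟨K, fun w => div_le_of_le_mul₀ dist_nonneg K.2
      (by simpa only [Real.dist_eq] using hu.dist_le_mul w z)⟩
  filter_upwards [eventually_nhdsWithin_iff.1 (eventually_lt_of_limsup_lt hc hbdd)] with w hw
  rcases eq_or_ne w z with rfl | hne
  · simp
  · exact (div_le_iff₀ (dist_pos.2 hne)).1 (hw hne).le

end liploc

section product

variable {α β : Type*} [MetricSpace α] [MetricSpace β] {u : WithLp 2 (α × β) → ℝ} {a : α} {b : β}
  {K₁ K₂ C : ℝ≥0}

lemma eventually_abs_sub_le_of_abs_mixed_sub_le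
    (h₁ : LipschitzWith K₁ fun s => u (toLp 2 (s, b)))
    (h₂ : LipschitzWith K₂ fun y => u (toLp 2 (a, y)))
    (hmix : ∀ s y, |u (toLp 2 (s, y)) - u (toLp 2 (s, b)) - u (toLp 2 (a, y)) + u (toLp 2 (a, b))|
      ≤ C * dist s a * dist y b)
    {ε : ℝ} (hε : 0 < ε) :
    ∀ᶠ w in 𝓝 (toLp 2 (a, b)), |u w - u (toLp 2 (a, b))|
      ≤ (√((liploc (fun y => u (toLp 2 (a, y))) b + ε) ^ 2
          + (liploc (fun s => u (toLp 2 (s, b))) a + ε) ^ 2) + C * ε)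
        * dist w (toLp 2 (a, b)) := by
  set A := liploc (fun y => u (toLp 2 (a, y))) b
  set B := liploc (fun s => u (toLp 2 (s, b))) a
  have hA := (Continuous.tendsto' (WithLp.continuous_snd 2 α β) (toLp 2 (a, b)) b rfl).eventually
    (eventually_abs_sub_le_of_liploc_lt h₂ (lt_add_of_pos_right A hε))
  have hB := (Continuous.tendsto' (WithLp.continuous_fst 2 α β) (toLp 2 (a, b)) a rfl).eventually
    (eventually_abs_sub_le_of_liploc_lt h₁ (lt_add_of_pos_right B hε))
  filter_upwards [hA, hB, Metric.ball_mem_nhds _ hε] with w hy hs hball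
  obtain ⟨s, y⟩ := w
  simp only [WithLp.toLp_fst, WithLp.toLp_snd] at hy hs
  have hdist := WithLp.prod_dist_eq_sqrt (toLp 2 (s, y)) (toLp 2 (a, b))
  simp only [WithLp.toLp_fst, WithLp.toLp_snd] at hdist
  set D := dist (toLp 2 (s, y)) (toLp 2 (a, b))
  have hD : D < ε := Metric.mem_ball.1 hball
  have hsD : dist s a ≤ D := hdist ▸ Real.le_sqrt_of_sq_le (by nlinarith [sq_nonneg (dist y b)])
  have hyD : dist y b ≤ D := hdist ▸ Real.le_sqrt_of_sq_le (by nlinarith [sq_nonneg (dist s a)])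
  have hcs := mul_add_mul_le_sqrt_mul_sqrt (A + ε) (B + ε) (dist y b) (dist s a)
  rw [add_comm (dist y b ^ 2), ← hdist] at hcs
  have hmixD : C * dist s a * dist y b ≤ C * ε * D := by
    rw [mul_assoc, mul_assoc]
    exact mul_le_mul_of_nonneg_left (mul_le_mul (hsD.trans hD.le) hyD dist_nonneg hε.le) C.2
  calc |u (toLp 2 (s, y)) - u (toLp 2 (a, b))|
      = |(u (toLp 2 (s, y)) - u (toLp 2 (s, b)) - u (toLp 2 (a, y)) + u (toLp 2 (a, b)))
          + (u (toLp 2 (a, y)) - u (toLp 2 (a, b))) + (u (toLp 2 (s, b)) - u (toLp 2 (a, b)))| := by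
        congr 1; ring
    _ ≤ C * dist s a * dist y b + (A + ε) * dist y b + (B + ε) * dist s a :=
        (abs_add_three _ _ _).trans (add_le_add_three (hmix s y) hy hs)
    _ ≤ (√((A + ε) ^ 2 + (B + ε) ^ 2) + C * ε) * D := by linarith

theorem liploc_sq_le_of_abs_mixed_sub_le
    (h₁ : LipschitzWith K₁ fun s => u (toLp 2 (s, b)))
    (h₂ : LipschitzWith K₂ fun y => u (toLp 2 (a, y)))
    (hmix : ∀ s y, |u (toLp 2 (s, y)) - u (toLp 2 (s, b)) - u (toLp 2 (a, y)) + u (toLp 2 (a, b))|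
      ≤ C * dist s a * dist y b) :
    liploc u (toLp 2 (a, b)) ^ 2
      ≤ liploc (fun y => u (toLp 2 (a, y))) b ^ 2 + liploc (fun s => u (toLp 2 (s, b))) a ^ 2 := by
  set A := liploc (fun y => u (toLp 2 (a, y))) b
  set B := liploc (fun s => u (toLp 2 (s, b))) a
  set bound : ℝ → ℝ := fun ε => √((A + ε) ^ 2 + (B + ε) ^ 2) + C * ε
  have hle : ∀ ε > 0, liploc u (toLp 2 (a, b)) ≤ bound ε := fun ε hε =>
    liploc_le_of_eventually_le (by positivity)
      (eventually_abs_sub_le_of_abs_mixed_sub_le h₁ h₂ hmix hε)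
  have hlim : Tendsto bound (𝓝[>] 0) (𝓝 √(A ^ 2 + B ^ 2)) := by
    have hcont : Continuous bound := by fun_prop
    simpa [bound] using (hcont.tendsto 0).mono_left nhdsWithin_le_nhds
  have hsqrt := ge_of_tendsto hlim (eventually_mem_nhdsWithin.mono hle)
  calc liploc u (toLp 2 (a, b)) ^ 2 ≤ √(A ^ 2 + B ^ 2) ^ 2 :=
        pow_le_pow_left₀ (liploc_nonneg _ _) hsqrt 2
    _ = A ^ 2 + B ^ 2 := Real.sq_sqrt (by positivity)

end product

theorem liploc_sq_le_of_product_form_general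
    {X : Type*} [MetricSpace X]
    (I : Set ℝ)
    (g₁ g₂ : X → ℝ) (h : ↥I → ℝ) (K₁ K₂ K₃ : NNReal)
    (hg₁ : LipschitzWith K₁ g₁) (hg₂ : LipschitzWith K₂ g₂) (hh : LipschitzWith K₃ h)
    (f : Xc I X → ℝ)
    (hf : ∀ (t : ↥I) (x : X), f (toC (t, x)) = g₁ x + h t * g₂ x) :
    ∀ (t : ↥I) (x : X),
      (liploc f (toC (t, x))) ^ 2
        ≤ (liploc (fun y => f (toC (t, y))) x) ^ 2
          + (liploc (fun s => f (toC (s, x))) t) ^ 2 := by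
  intro t x
  have hslice₁ : (fun s => f (toC (s, x))) = fun s => g₁ x + g₂ x • h s :=
    funext fun s => (hf s x).trans (by rw [smul_eq_mul, mul_comm])
  have hslice₂ : (fun y => f (toC (t, y))) = fun y => g₁ y + h t • g₂ y := funext (hf t)
  have hlip₁ : LipschitzWith (0 + ‖g₂ x‖₊ * K₃) fun s => f (toC (s, x)) :=
    hslice₁ ▸ (LipschitzWith.const (g₁ x)).add ((lipschitzWith_smul (g₂ x)).comp hh)
  have hlip₂ : LipschitzWith (K₁ + ‖h t‖₊ * K₂) fun y => f (toC (t, y)) :=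
    hslice₂ ▸ hg₁.add ((lipschitzWith_smul (h t)).comp hg₂)
  refine liploc_sq_le_of_abs_mixed_sub_le (C := K₃ * K₂) hlip₁ hlip₂ fun s y => ?_
  have hmix : f (toC (s, y)) - f (toC (s, x)) - f (toC (t, y)) + f (toC (t, x))
      = (h s - h t) * (g₂ y - g₂ x) := by
    rw [hf, hf, hf, hf]
    ring
  rw [show toLp 2 = toC from rfl, hmix, abs_mul, ← Real.dist_eq, ← Real.dist_eq]
  exact (mul_le_mul (hh.dist_le_mul s t) (hg₂.dist_le_mul y x) dist_nonneg (by positivity)).trans_eq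
    (by push_cast; ring)

/-- **Lemma.** For `f(t,x) = g₁(x) + h(t)·g₂(x)` with `g₁`, `g₂`, `h` Lipschitz, at every
point `(t,x)` of `I × X` one has `lip f (t,x)² ≤ lip f^{(t)} (x)² + lip f^{(x)} (t)²`. -/
theorem liploc_sq_le_of_product_form
    {X : Type*} [MetricSpace X]
    (I : Set ℝ) (hIne : I.Nonempty) (hIcl : IsClosed I) (hIconn : I.OrdConnected)
    (g₁ g₂ : X → ℝ) (h : ↥I → ℝ) (K₁ K₂ K₃ : NNReal)
    (hg₁ : LipschitzWith K₁ g₁) (hg₂ : LipschitzWith K₂ g₂) (hh : LipschitzWith K₃ h)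
    (f : Xc I X → ℝ)
    (hf : ∀ (t : ↥I) (x : X), f (toC (t, x)) = g₁ x + h t * g₂ x) :
    ∀ (t : ↥I) (x : X),
      (liploc f (toC (t, x))) ^ 2
        ≤ (liploc (fun y => f (toC (t, y))) x) ^ 2
          + (liploc (fun s => f (toC (s, x))) t) ^ 2 :=
  liploc_sq_le_of_product_form_general I g₁ g₂ h K₁ K₂ K₃ hg₁ hg₂ hh f hf

end MMS
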